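/- arXiv:math/0206252 — 2 statements merged into one kernel-verified Lean document; each statement's English description precedes it below -/
import Mathlib

section
/- Let 1 ≤ i₀ ≤ j₀ ≤ n and let I(i₀,j₀) = { A ∈ T_n : A i j = 0 whenever i₀ ≤ i ≤ j ≤ j₀ } ⊆ T_n, the upper triangular n×n complex matrices. Then I(i₀,j₀) is meet irreducible: if J₁ and J₂ are two-sided ideals of T_n containing I(i₀,j₀) with J₁ ∩ J₂ = I(i₀,j₀), then J₁ = I(i₀,j₀) or J₂ = I(i₀,j₀). -/
open Matrix

/-- The algebra `T_n` of upper triangular `n × n` complex matrices. -/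
def UT (n : ℕ) : Subalgebra ℂ (Matrix (Fin n) (Fin n) ℂ) where
  carrier := {A | ∀ i j : Fin n, j < i → A i j = 0}
  add_mem' := by
    intro a b ha hb i j hij
    simp [Matrix.add_apply, ha i j hij, hb i j hij]
  mul_mem' := by
    intro a b ha hb i j hij
    show ∑ k, a i k * b k j = 0
    apply Finset.sum_eq_zero
    intro k _
    rcases lt_or_ge k i with h | h
    · rw [ha i k h, zero_mul]
    · rw [hb k j (lt_of_lt_of_le hij h), mul_zero]
  algebraMap_mem' := by
    intro r i j hij
    simp [Matrix.algebraMap_matrix_apply, (ne_of_lt hij).symm]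

/-- The "wedge" set `I(i₀, j₀)` of upper triangular matrices vanishing on the
wedge `i₀ ≤ i ≤ j ≤ j₀`. -/
def wedge (n : ℕ) (i₀ j₀ : Fin n) : Set (UT n) :=
  {A | ∀ i j : Fin n, i₀ ≤ i → i ≤ j → j ≤ j₀ → (A : Matrix (Fin n) (Fin n) ℂ) i j = 0}
/-- The wedge ideal `I(i₀, j₀)` as a two-sided ideal of `T_n`. -/
def wedgeIdeal (n : ℕ) (i₀ j₀ : Fin n) : TwoSidedIdeal (UT n) :=
  TwoSidedIdeal.mk' (wedge n i₀ j₀)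
    (by intro i j _ _ _; rfl)
    (by
      intro x y hx hy i j h1 h2 h3
      show (x : Matrix (Fin n) (Fin n) ℂ) i j + (y : Matrix (Fin n) (Fin n) ℂ) i j = 0
      rw [hx i j h1 h2 h3, hy i j h1 h2 h3, add_zero])
    (by
      intro x hx i j h1 h2 h3
      show -(x : Matrix (Fin n) (Fin n) ℂ) i j = 0
      rw [hx i j h1 h2 h3, neg_zero])
    (by
      intro x y hy i j h1 h2 h3
      show ∑ k, (x : Matrix (Fin n) (Fin n) ℂ) i k * (y : Matrix (Fin n) (Fin n) ℂ) k j = 0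
      apply Finset.sum_eq_zero
      intro k _
      rcases lt_or_ge k i with h | h
      · rw [x.2 i k h, zero_mul]
      · rcases le_or_gt k j with h' | h'
        · rw [hy k j (le_trans h1 h) h' h3, mul_zero]
        · rw [y.2 k j h', mul_zero])
    (by
      intro x y hx i j h1 h2 h3
      show ∑ k, (x : Matrix (Fin n) (Fin n) ℂ) i k * (y : Matrix (Fin n) (Fin n) ℂ) k j = 0
      apply Finset.sum_eq_zero
      intro k _
      rcases lt_or_ge k i with h | h
      · rw [x.2 i k h, zero_mul]
      · rcases le_or_gt k j with h' | h'
        · rw [hx i k h1 h (le_trans h' h3), zero_mul]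
        · rw [y.2 k j h', mul_zero])

/-! Sandwiching a matrix `A` with a nonzero entry `A i j` between matrix units gives
`E i₀ i * A * E j j₀ = A i j • E i₀ j₀`. Hence every ideal of `T_n` strictly above
`I(i₀, j₀)` contains `E i₀ j₀`, and so does the intersection of two such ideals; but
`E i₀ j₀ ∉ I(i₀, j₀)`. -/

namespace UT

variable {n : ℕ}

noncomputable def single (i j : Fin n) (hij : i ≤ j) (c : ℂ) : UT n :=
  ⟨Matrix.single i j c, fun _ _ hqp ↦
    Matrix.single_apply_of_ne _ _ _ _ _ fun ⟨hi, hj⟩ ↦ (hi ▸ hj ▸ hij).not_gt hqp⟩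

@[simp]
lemma coe_single (i j : Fin n) (hij : i ≤ j) (c : ℂ) :
    (single i j hij c : Matrix (Fin n) (Fin n) ℂ) = Matrix.single i j c :=
  rfl

lemma single_mem_of_apply_ne_zero {J : TwoSidedIdeal (UT n)} {A : UT n} (hA : A ∈ J)
    {i' i j j' : Fin n} (hi : i' ≤ i) (hij : i ≤ j) (hj : j ≤ j')
    (hA₀ : (A : Matrix (Fin n) (Fin n) ℂ) i j ≠ 0) :
    single i' j' (hi.trans (hij.trans hj)) 1 ∈ J := by
  have hsandwich : single i' i hi (A.1 i j)⁻¹ * A * single j j' hj 1 =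
      single i' j' (hi.trans (hij.trans hj)) 1 :=
    Subtype.ext <| by simp [inv_mul_cancel₀ hA₀]
  exact hsandwich ▸ J.mul_mem_right _ _ (J.mul_mem_left _ _ hA)

end UT

section wedgeIdeal

variable {n : ℕ} {i₀ j₀ : Fin n}

lemma mem_wedgeIdeal_iff {A : UT n} :
    A ∈ wedgeIdeal n i₀ j₀ ↔
      ∀ i j, i₀ ≤ i → i ≤ j → j ≤ j₀ → (A : Matrix (Fin n) (Fin n) ℂ) i j = 0 :=
  TwoSidedIdeal.mem_mk' _ _ _ _ _ _ _

lemma UT.single_notMem_wedgeIdeal (h : i₀ ≤ j₀) {c : ℂ} (hc : c ≠ 0) :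
    UT.single i₀ j₀ h c ∉ wedgeIdeal n i₀ j₀ := fun hmem ↦
  hc <| by simpa using mem_wedgeIdeal_iff.1 hmem i₀ j₀ le_rfl h le_rfl

lemma exists_single_mem_of_wedgeIdeal_lt {J : TwoSidedIdeal (UT n)}
    (hlt : wedgeIdeal n i₀ j₀ < J) : ∃ h : i₀ ≤ j₀, UT.single i₀ j₀ h 1 ∈ J := by
  obtain ⟨A, hAJ, hAI⟩ := SetLike.exists_of_lt hlt
  simp only [mem_wedgeIdeal_iff, not_forall] at hAI
  obtain ⟨i, j, hi, hij, hj, hA₀⟩ := hAI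
  exact ⟨_, UT.single_mem_of_apply_ne_zero hAJ hi hij hj hA₀⟩

end wedgeIdeal

theorem wedgeIdeal_meetIrreducible_general (n : ℕ) (i₀ j₀ : Fin n)
    (J₁ J₂ : TwoSidedIdeal (UT n))
    (h₁ : wedgeIdeal n i₀ j₀ ≤ J₁) (h₂ : wedgeIdeal n i₀ j₀ ≤ J₂)
    (hmeet : J₁ ⊓ J₂ = wedgeIdeal n i₀ j₀) :
    J₁ = wedgeIdeal n i₀ j₀ ∨ J₂ = wedgeIdeal n i₀ j₀ := by
  by_contra! hne
  obtain ⟨h, hmem₁⟩ := exists_single_mem_of_wedgeIdeal_lt (h₁.lt_of_ne hne.1.symm)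
  obtain ⟨_, hmem₂⟩ := exists_single_mem_of_wedgeIdeal_lt (h₂.lt_of_ne hne.2.symm)
  refine UT.single_notMem_wedgeIdeal h one_ne_zero ?_
  exact hmeet ▸ (TwoSidedIdeal.mem_inf _).2 ⟨hmem₁, hmem₂⟩

/-- the wedge ideal `I(i₀,j₀)` is meet irreducible in `T_n`. -/
theorem wedgeIdeal_meetIrreducible (n : ℕ) (i₀ j₀ : Fin n) (h : i₀ ≤ j₀)
    (J₁ J₂ : TwoSidedIdeal (UT n))
    (h₁ : wedgeIdeal n i₀ j₀ ≤ J₁) (h₂ : wedgeIdeal n i₀ j₀ ≤ J₂)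
    (hmeet : J₁ ⊓ J₂ = wedgeIdeal n i₀ j₀) :
    J₁ = wedgeIdeal n i₀ j₀ ∨ J₂ = wedgeIdeal n i₀ j₀ :=
  wedgeIdeal_meetIrreducible_general n i₀ j₀ J₁ J₂ h₁ h₂ hmeet
end

section
/- Let P be an orthogonal projection on ℂⁿ and T ⊆ M_n(ℂ) a subalgebra. Then P is semi-invariant for T (i.e., PaPbP = PabP for all a,b ∈ T) if and only if P = Q - Q' where Q, Q' are orthogonal projections with Q' ≤ Q and both range Q and range Q' are invariant subspaces for T. -/
/-!
If `P` is semi-invariant for `T`, let `M` be the closed span of `T · range P`. It is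
`T`-invariant and contains `range P`, and semi-invariance says exactly that `P t - P t P`
vanishes on every `s (range P)`, hence on `M`. So the orthogonal projection `Q` onto `M`
satisfies `Q t Q = t Q` and `P t Q = P t P`, and these two identities make
`range (Q - P) = M ⊖ range P` invariant as well.

Conversely, if `P = Q - Q'` with `range Q' ⊆ range Q` both invariant, then `Q b P = b P` and
`P a Q' = P Q' a Q' = 0`, so `P a P b P = P a (Q - Q') b P = P a b P`.
-/

open Matrix

theorem IsSelfAdjoint.mul_eq_left_of_mul_eq_right {R : Type*} [Mul R] [StarMul R] {p q : R}
    (hp : IsSelfAdjoint p) (hq : IsSelfAdjoint q) (h : q * p = p) : p * q = p := by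
  simpa [hp.star_eq, hq.star_eq] using congr(star $h)

def IsSemiInvariant {A : Type*} [Mul A] (S : Set A) (p : A) : Prop :=
  ∀ a ∈ S, ∀ b ∈ S, p * a * p * b * p = p * a * b * p

section Ring

variable {A : Type*} [Ring A]

theorem isSemiInvariant_sub {S : Set A} {q q' : A} (hq'_idem : IsIdempotentElem q')
    (hqq' : q * q' = q') (hq : ∀ t ∈ S, q * t * q = t * q)
    (hq' : ∀ t ∈ S, q' * t * q' = t * q') :
    IsSemiInvariant S (q - q') := by
  intro a ha b hb
  have hbq' : q * b * q' = b * q' := by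
    calc q * b * q' = q * (q' * b * q') := by rw [hq' b hb, mul_assoc]
      _ = b * q' := by rw [← mul_assoc, ← mul_assoc, hqq', hq' b hb]
  have haq' : (q - q') * a * q' = 0 := by
    calc (q - q') * a * q' = (q - q') * (q' * a * q') := by rw [hq' a ha, mul_assoc]
      _ = 0 := by
        rw [← mul_assoc, ← mul_assoc, sub_mul, hqq', hq'_idem.eq, sub_self, zero_mul, zero_mul]
  calc (q - q') * a * (q - q') * b * (q - q')
      = (q - q') * a * (q * b * q - q * b * q') - (q - q') * a * q' * b * (q - q') := by
        noncomm_ring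
    _ = (q - q') * a * b * (q - q') := by
        rw [hq b hb, hbq', haq']; noncomm_ring

theorem sub_mul_mul_sub_eq_mul_sub {p q t : A} (hqp : q * p = p) (hqt : q * t * q = t * q)
    (hpt : p * t * q = p * t * p) : (q - p) * t * (q - p) = t * (q - p) := by
  have hqtp : q * t * p = t * p := by rw [← hqp, ← mul_assoc, hqt, mul_assoc]
  calc (q - p) * t * (q - p) = q * t * q - q * t * p - p * t * q + p * t * p := by noncomm_ring
    _ = t * (q - p) := by rw [hqt, hqtp, hpt]; noncomm_ring

end Ring

namespace Subalgebra

variable {𝕜 E : Type*} [NontriviallyNormedField 𝕜] [NormedAddCommGroup E] [NormedSpace 𝕜 E]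

def invtSpan (S : Subalgebra 𝕜 (E →L[𝕜] E)) (U : Submodule 𝕜 E) : Submodule 𝕜 E :=
  (⨆ t : S, U.map (t : E →ₗ[𝕜] E)).topologicalClosure

variable (S : Subalgebra 𝕜 (E →L[𝕜] E)) (U : Submodule 𝕜 E)

instance [CompleteSpace E] : CompleteSpace (S.invtSpan U) :=
  Submodule.topologicalClosure.completeSpace _

theorem map_le_invtSpan {t : E →L[𝕜] E} (ht : t ∈ S) :
    U.map (t : E →ₗ[𝕜] E) ≤ S.invtSpan U :=
  (le_iSup (fun s : S => U.map (s : E →ₗ[𝕜] E)) ⟨t, ht⟩).trans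
    (Submodule.le_topologicalClosure _)

theorem le_invtSpan : U ≤ S.invtSpan U :=
  fun x hx => S.map_le_invtSpan U S.one_mem ⟨x, hx, rfl⟩

theorem invtSpan_mem_invtSubmodule {t : E →L[𝕜] E} (ht : t ∈ S) :
    S.invtSpan U ∈ Module.End.invtSubmodule (t : E →ₗ[𝕜] E) := by
  refine Submodule.topologicalClosure_mem_invtSubmodule ?_
  rw [Module.End.mem_invtSubmodule_iff_map_le, Submodule.map_iSup]
  refine iSup_le fun s => ?_
  rw [← Submodule.map_comp]
  exact le_iSup (fun s : S => U.map (s : E →ₗ[𝕜] E)) ⟨t * s, S.mul_mem ht s.2⟩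

theorem invtSpan_le_ker {f : E →L[𝕜] E} (hf : ∀ t ∈ S, ∀ x ∈ U, f (t x) = 0) :
    S.invtSpan U ≤ LinearMap.ker (f : E →ₗ[𝕜] E) := by
  refine Submodule.topologicalClosure_minimal _ (iSup_le fun t => ?_) f.isClosed_ker
  rintro _ ⟨x, hx, rfl⟩
  exact hf t t.2 x hx

end Subalgebra

section Operator

variable {𝕜 E : Type*} [RCLike 𝕜] [NormedAddCommGroup E] [InnerProductSpace 𝕜 E]
  [CompleteSpace E]

theorem ContinuousLinearMap.exists_invariant_starProjection_of_isSemiInvariant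
    (S : Subalgebra 𝕜 (E →L[𝕜] E)) {p : E →L[𝕜] E} (hp : IsSelfAdjoint p)
    (hsemi : IsSemiInvariant (S : Set (E →L[𝕜] E)) p) :
    ∃ q : E →L[𝕜] E, IsStarProjection q ∧ q * p = p ∧
      (∀ t ∈ S, q * t * q = t * q) ∧ ∀ t ∈ S, p * t * q = p * t * p := by
  set M := S.invtSpan p.range
  have hq := isStarProjection_starProjection (U := M)
  have hqp : M.starProjection * p = p := by
    ext1 x
    exact Submodule.starProjection_eq_self_iff.mpr
      (S.le_invtSpan _ (LinearMap.mem_range_self _ x))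
  have hpq := hp.mul_eq_left_of_mul_eq_right hq.isSelfAdjoint hqp
  refine ⟨M.starProjection, hq, hqp, fun t ht => ?_, fun t ht => ?_⟩
  · have hM : M ∈ Module.End.invtSubmodule (t : E →ₗ[𝕜] E) :=
      S.invtSpan_mem_invtSubmodule _ ht
    rw [← M.range_starProjection] at hM
    exact IsIdempotentElem.conj_eq_of_range_mem_invtSubmodule hq.isIdempotentElem hM
  · have hker := S.invtSpan_le_ker (f := p * t - p * t * p) p.range fun s hs x ⟨y, hy⟩ => by
        have hzero : (p * t - p * t * p) * s * p = 0 := by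
          rw [sub_mul, sub_mul, ← hsemi t ht s hs, sub_eq_zero]
        rw [← hy]
        exact congr($hzero y)
    have h0 : (p * t - p * t * p) * M.starProjection = 0 := by
      ext1 x
      exact hker (M.starProjection_apply_mem x)
    rw [sub_mul, sub_eq_zero, mul_assoc _ p, hpq] at h0
    exact h0

end Operator

theorem Matrix.exists_invariant_starProjection_of_isSemiInvariant {𝕜 n : Type*} [RCLike 𝕜]
    [Fintype n] [DecidableEq n] (S : Subalgebra 𝕜 (Matrix n n 𝕜)) {P : Matrix n n 𝕜}
    (hP : IsSelfAdjoint P) (hsemi : IsSemiInvariant (S : Set (Matrix n n 𝕜)) P) :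
    ∃ Q : Matrix n n 𝕜, IsStarProjection Q ∧ Q * P = P ∧
      (∀ t ∈ S, Q * t * Q = t * Q) ∧ ∀ t ∈ S, P * t * Q = P * t * P := by
  let φ := toEuclideanCLM (n := n) (𝕜 := 𝕜)
  let S' := S.map φ.toAlgEquiv.toAlgHom
  have hsemi' : IsSemiInvariant (S' : Set _) (φ P) := by
    rintro _ ⟨a, ha, rfl⟩ _ ⟨b, hb, rfl⟩
    simpa [← map_mul] using congr(φ $(hsemi a ha b hb))
  obtain ⟨q, hq, hqp, hqinv, hpq⟩ :=
    ContinuousLinearMap.exists_invariant_starProjection_of_isSemiInvariant S' (hP.map φ) hsemi'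
  refine ⟨φ.symm q, hq.map φ.symm, by simpa using congr(φ.symm $hqp),
    fun t ht => by simpa using congr(φ.symm $(hqinv (φ t) ⟨t, ht, rfl⟩)),
    fun t ht => by simpa using congr(φ.symm $(hpq (φ t) ⟨t, ht, rfl⟩))⟩

/-- Sarason: an orthogonal projection `P` is semi-invariant for a
subalgebra `T ⊆ M_n(ℂ)` iff `P = Q - Q'` for orthogonal projections `Q' ≤ Q` whose
ranges are invariant for `T` (invariance of the range of a projection `Q` being
expressed by `QtQ = tQ` for all `t ∈ T`). -/
theorem semiInvariant_iff_diff_of_invariant_projections (n : ℕ)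
    (P : Matrix (Fin n) (Fin n) ℂ) (hsa : Pᴴ = P) (hidem : P * P = P)
    (T : Subalgebra ℂ (Matrix (Fin n) (Fin n) ℂ)) :
    (∀ a b : T,
        P * (a : Matrix (Fin n) (Fin n) ℂ) * P * (b : Matrix (Fin n) (Fin n) ℂ) * P =
        P * (a : Matrix (Fin n) (Fin n) ℂ) * (b : Matrix (Fin n) (Fin n) ℂ) * P) ↔
      ∃ Q Q' : Matrix (Fin n) (Fin n) ℂ,
        Qᴴ = Q ∧ Q * Q = Q ∧ Q'ᴴ = Q' ∧ Q' * Q' = Q' ∧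
        Q' * Q = Q' ∧ Q * Q' = Q' ∧
        P = Q - Q' ∧
        (∀ t : T, Q * (t : Matrix (Fin n) (Fin n) ℂ) * Q = (t : Matrix (Fin n) (Fin n) ℂ) * Q) ∧
        (∀ t : T, Q' * (t : Matrix (Fin n) (Fin n) ℂ) * Q' = (t : Matrix (Fin n) (Fin n) ℂ) * Q') := by
  constructor
  · intro hsemi
    have hP : IsStarProjection P := ⟨hidem, hsa⟩
    obtain ⟨Q, hQ, hQP, hQinv, hPtQ⟩ := exists_invariant_starProjection_of_isSemiInvariant T
      hP.isSelfAdjoint fun a ha b hb => hsemi ⟨a, ha⟩ ⟨b, hb⟩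
    have hQ' := hP.sub_of_mul_eq_right hQ hQP
    have hPQ := hP.isSelfAdjoint.mul_eq_left_of_mul_eq_right hQ.isSelfAdjoint hQP
    refine ⟨Q, Q - P, hQ.isSelfAdjoint, hQ.isIdempotentElem, hQ'.isSelfAdjoint,
      hQ'.isIdempotentElem, by rw [sub_mul, hQ.isIdempotentElem.eq, hPQ],
      by rw [mul_sub, hQ.isIdempotentElem.eq, hQP], (sub_sub_cancel Q P).symm,
      fun t => hQinv t t.2, fun t => sub_mul_mul_sub_eq_mul_sub hQP (hQinv t t.2) (hPtQ t t.2)⟩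
  · rintro ⟨Q, Q', -, -, -, hQ', -, hQQ', rfl, hQinv, hQ'inv⟩ a b
    exact isSemiInvariant_sub hQ' hQQ' (fun t ht => hQinv ⟨t, ht⟩)
      (fun t ht => hQ'inv ⟨t, ht⟩) a a.2 b b.2
end
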